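/- There exist C > 0 and ε₀ > 0 such that for all ε ∈ (0, ε₀), all ξ ∈ [−ξ₁, ξ₂], and all θ ∈ [0,π] with θ ≤ √(ε·|ln ε|): |q_h(ξ,θ)| ≤ C. -/

import Mathlib

/-!
For small `ε` one has `a_ε² ≍ ε`, and `ξ₁, ξ₂, s₀ ≍ a_ε`. Every pair `(y, c)` occurring in `q_h`
has `|y| ≤ s₀` and `|y - c| ≥ min(ξ₁, ξ₂)`, so with `S = a_ε² + θ²` the numerator `w_θ(y)²` is
`O(S)` while the denominator `w_θ(y - c)²` is bounded below by a multiple of `S`. Hence each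
`𝓘₁`-term is `O(S / a_ε²) = O(1 + θ² / ε) = O(1 + |ln ε|)`, and this logarithmic growth is
cancelled by `μ_ε ≍ 1 / |ln ε|`.
-/

open Real

noncomputable section

/-- The distance parameter `a_ε`. -/
def aEps (r₁ r₂ ε : ℝ) : ℝ :=
  Real.sqrt ε * Real.sqrt ((2*r₁+ε)*(2*r₂+ε)*(2*r₁+2*r₂+ε)) / (2*(r₁+r₂+ε))

def xi (r : ℝ) (r₁ r₂ ε : ℝ) : ℝ := Real.arsinh (aEps r₁ r₂ ε / r)

def sZero (r₁ r₂ ε : ℝ) : ℝ := xi r₁ r₁ r₂ ε + xi r₂ r₁ r₂ ε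

/-- `w θ ξ = √(cosh ξ − cos θ)`. -/
def w (θ ξ : ℝ) : ℝ := Real.sqrt (Real.cosh ξ - Real.cos θ)

/-- The digamma value `ψ₀(z) = −γ + ∑_{k≥0} (z−1)/((k+1)(k+z))`. -/
def digammaVal (z : ℝ) : ℝ :=
  -Real.eulerMascheroniConstant + ∑' k : ℕ, (z - 1) / ((k + 1) * (k + z))

def rTilde (r₁ r₂ : ℝ) : ℝ := r₁ * r₂ / (r₁ + r₂)

/-- `μ_j` for `j = 1, 2`. -/
def muConst (r₁ r₂ : ℝ) (j : ℕ) : ℝ :=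
  (digammaVal ((if j = 1 then r₁ else r₂) / (r₁ + r₂)) + Real.eulerMascheroniConstant) /
    (digammaVal (r₁ / (r₁ + r₂)) + digammaVal (r₂ / (r₁ + r₂)) +
      2 * Real.eulerMascheroniConstant)

/-- `μ_ε`. -/
def muEps (r₁ r₂ ε : ℝ) : ℝ :=
  (1 / (2 * Real.pi * rTilde r₁ r₂)) *
    (|Real.log ε| + Real.log (rTilde r₁ r₂) + Real.log 2 -
      2 * (digammaVal (r₁ / (r₁ + r₂)) * digammaVal (r₂ / (r₁ + r₂)) -
          Real.eulerMascheroniConstant ^ 2) /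
        (digammaVal (r₁ / (r₁ + r₂)) + digammaVal (r₂ / (r₁ + r₂)) +
          2 * Real.eulerMascheroniConstant))⁻¹

/-- `𝓘₁(ξ,θ;c) = (1/(2 a_ε s₀)) · w_θ(ξ)³ / w_θ(ξ−c)`. -/
def I1 (r₁ r₂ ε ξ θ c : ℝ) : ℝ :=
  (1 / (2 * aEps r₁ r₂ ε * sZero r₁ r₂ ε)) * w θ ξ ^ 3 / w θ (ξ - c)

/-- The blow-up factor `q_h(ξ,θ)`. -/
def qh (r₁ r₂ ε ξ θ : ℝ) : ℝ :=
  muEps r₁ r₂ ε * muConst r₁ r₂ 1 *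
      (I1 r₁ r₂ ε (-ξ) θ (2 * xi r₁ r₁ r₂ ε) +
        I1 r₁ r₂ ε ξ θ (2 * xi r₁ r₁ r₂ ε + 2 * xi r₂ r₁ r₂ ε)) +
    muEps r₁ r₂ ε * muConst r₁ r₂ 2 *
      (I1 r₁ r₂ ε ξ θ (2 * xi r₂ r₁ r₂ ε) +
        I1 r₁ r₂ ε (-ξ) θ (2 * xi r₁ r₁ r₂ ε + 2 * xi r₂ r₁ r₂ ε))


open Filter Topology Set

namespace Real

lemma arsinh_le_self {x : ℝ} (hx : 0 ≤ x) : arsinh x ≤ x := by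
  rw [← sinh_le_sinh, sinh_arsinh]
  exact self_le_sinh_iff.2 hx

lemma half_le_arsinh {x : ℝ} (hx₀ : 0 ≤ x) (hx₁ : x ≤ 1) : x / 2 ≤ arsinh x := by
  rw [← sinh_le_sinh, sinh_arsinh, sinh_eq]
  have hexp := abs_le.1
    (abs_exp_sub_one_sub_id_le (x := x / 2) (abs_le.2 ⟨by linarith, by linarith⟩))
  have hexp_neg := add_one_le_exp (-(x / 2))
  nlinarith

lemma cosh_sub_one_le_sq {y : ℝ} (hy : |y| ≤ 1) : cosh y - 1 ≤ y ^ 2 := by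
  have hpos := abs_le.1 (abs_exp_sub_one_sub_id_le hy)
  have hneg := abs_le.1 (abs_exp_sub_one_sub_id_le (x := -y) (by rwa [abs_neg]))
  rw [cosh_eq]
  nlinarith

end Real

lemma w_sq (θ ξ : ℝ) : w θ ξ ^ 2 = cosh ξ - cos θ :=
  sq_sqrt (by linarith [one_le_cosh ξ, cos_le_one θ])

lemma w_sq_le {θ y : ℝ} (hy : |y| ≤ 1) : w θ y ^ 2 ≤ y ^ 2 + θ ^ 2 / 2 := by
  rw [w_sq]
  linarith [cosh_sub_one_le_sq hy, one_sub_sq_div_two_le_cos (x := θ)]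

lemma le_w_sq {θ t x : ℝ} (hx₀ : 0 ≤ x) (hx₁ : x ≤ 1) (ht : arsinh x ≤ |t|) (hθ : |θ| ≤ π) :
    x ^ 2 / 4 + 2 / π ^ 2 * θ ^ 2 ≤ w θ t ^ 2 := by
  have hcosh : √(1 + x ^ 2) ≤ cosh t := by
    rw [← cosh_arsinh, cosh_le_cosh, abs_of_nonneg (arsinh_nonneg_iff.2 hx₀)]
    exact ht
  have hx2 : x ^ 2 ≤ 1 := pow_le_one₀ hx₀ hx₁
  have hsqrt : 1 + x ^ 2 / 4 ≤ √(1 + x ^ 2) :=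
    le_sqrt_of_sq_le (by nlinarith [mul_le_mul_of_nonneg_left hx2 (sq_nonneg x)])
  rw [w_sq]
  linarith [cos_le_one_sub_mul_cos_sq hθ]

lemma w_sq_le_mul {θ y a r : ℝ} (hr : 0 < r) (ha : a ≤ r) (hy : |y| ≤ a / r) :
    w θ y ^ 2 ≤ (1 / r ^ 2 + 1) * (a ^ 2 + θ ^ 2) :=
  calc w θ y ^ 2 ≤ y ^ 2 + θ ^ 2 / 2 := w_sq_le (hy.trans ((div_le_one hr).2 ha))
    _ ≤ (a / r) ^ 2 + θ ^ 2 := by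
        have := sq_le_sq' (abs_le.1 hy).1 (abs_le.1 hy).2
        linarith [sq_nonneg θ]
    _ ≤ (a / r) ^ 2 + θ ^ 2 + (a ^ 2 + (θ / r) ^ 2) := le_add_of_nonneg_right (by positivity)
    _ = (1 / r ^ 2 + 1) * (a ^ 2 + θ ^ 2) := by ring

lemma mul_le_w_sq {θ t a r : ℝ} (ha : 0 ≤ a) (hr : 0 < r) (har : a ≤ r)
    (ht : arsinh (a / r) ≤ |t|) (hθ : |θ| ≤ π) :
    min (1 / (4 * r ^ 2)) (2 / π ^ 2) * (a ^ 2 + θ ^ 2) ≤ w θ t ^ 2 :=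
  calc min (1 / (4 * r ^ 2)) (2 / π ^ 2) * (a ^ 2 + θ ^ 2)
      ≤ 1 / (4 * r ^ 2) * a ^ 2 + 2 / π ^ 2 * θ ^ 2 := by
        rw [mul_add]
        gcongr
        exacts [min_le_left _ _, min_le_right _ _]
    _ = (a / r) ^ 2 / 4 + 2 / π ^ 2 * θ ^ 2 := by field_simp
    _ ≤ w θ t ^ 2 := le_w_sq (by positivity) ((div_le_one hr).2 har) ht hθ

lemma pow_three_div_le {u v M m S : ℝ} (hu : 0 ≤ u) (hv : 0 ≤ v) (hm : 0 < m) (hS : 0 < S)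
    (hu2 : u ^ 2 ≤ M * S) (hv2 : m * S ≤ v ^ 2) : u ^ 3 / v ≤ √(M ^ 3 / m) * S := by
  have hM : 0 ≤ M := nonneg_of_mul_nonneg_left ((sq_nonneg u).trans hu2) hS
  rw [← sqrt_sq hS.le, ← sqrt_mul' _ (sq_nonneg S), le_sqrt (by positivity) (by positivity)]
  calc (u ^ 3 / v) ^ 2 = (u ^ 2) ^ 3 / v ^ 2 := by ring
    _ ≤ (M * S) ^ 3 / (m * S) := by gcongr
    _ = M ^ 3 / m * S ^ 2 := by field_simp

section

variable {r₁ r₂ ε : ℝ}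

lemma rTilde_pos (hr₁ : 0 < r₁) (hr₂ : 0 < r₂) : 0 < rTilde r₁ r₂ := by
  unfold rTilde
  positivity

lemma rTilde_le_add (hr₁ : 0 < r₁) (hr₂ : 0 < r₂) : rTilde r₁ r₂ ≤ r₁ + r₂ := by
  unfold rTilde
  rw [div_le_iff₀ (by positivity)]
  nlinarith

lemma aEps_nonneg (hr₁ : 0 < r₁) (hr₂ : 0 < r₂) (hε : 0 ≤ ε) : 0 ≤ aEps r₁ r₂ ε := by
  unfold aEps
  positivity

lemma aEps_pos (hr₁ : 0 < r₁) (hr₂ : 0 < r₂) (hε : 0 < ε) : 0 < aEps r₁ r₂ ε := by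
  unfold aEps
  positivity

lemma mul_le_aEps_sq (hr₁ : 0 < r₁) (hr₂ : 0 < r₂) (hε₀ : 0 ≤ ε) (hε₁ : ε ≤ 1) :
    2 * r₁ * r₂ * (r₁ + r₂) / (r₁ + r₂ + 1) ^ 2 * ε ≤ aEps r₁ r₂ ε ^ 2 := by
  rw [aEps, div_pow, mul_pow, sq_sqrt hε₀, sq_sqrt (by positivity)]
  calc 2 * r₁ * r₂ * (r₁ + r₂) / (r₁ + r₂ + 1) ^ 2 * ε
      = ε * ((2 * r₁) * (2 * r₂) * (2 * r₁ + 2 * r₂)) / (2 * (r₁ + r₂ + 1)) ^ 2 := by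
        field_simp
    _ ≤ ε * ((2 * r₁ + ε) * (2 * r₂ + ε) * (2 * r₁ + 2 * r₂ + ε)) / (2 * (r₁ + r₂ + ε)) ^ 2 := by
        gcongr ε * (?_ * ?_ * ?_) / (2 * ?_) ^ 2 <;> linarith

lemma tendsto_aEps_zero (hr₁ : 0 < r₁) (hr₂ : 0 < r₂) : Tendsto (aEps r₁ r₂) (𝓝 0) (𝓝 0) := by
  have hcont : ContinuousAt (aEps r₁ r₂) 0 := by
    unfold aEps
    exact ContinuousAt.div (by fun_prop) (by fun_prop) (by positivity)
  simpa [aEps] using hcont.tendsto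

lemma arsinh_div_le_xi {r : ℝ} (hr₁ : 0 < r₁) (hr₂ : 0 < r₂) (hε : 0 ≤ ε) (hr : 0 < r)
    (hrr : r ≤ r₁ + r₂) : arsinh (aEps r₁ r₂ ε / (r₁ + r₂)) ≤ xi r r₁ r₂ ε :=
  arsinh_le_arsinh.2 (div_le_div_of_nonneg_left (aEps_nonneg hr₁ hr₂ hε) hr hrr)

lemma sZero_le (hr₁ : 0 < r₁) (hr₂ : 0 < r₂) (hε : 0 ≤ ε) :
    sZero r₁ r₂ ε ≤ aEps r₁ r₂ ε / rTilde r₁ r₂ := by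
  have ha := aEps_nonneg hr₁ hr₂ hε
  calc sZero r₁ r₂ ε ≤ aEps r₁ r₂ ε / r₁ + aEps r₁ r₂ ε / r₂ :=
        add_le_add (arsinh_le_self (by positivity)) (arsinh_le_self (by positivity))
    _ = aEps r₁ r₂ ε / rTilde r₁ r₂ := by unfold rTilde; field_simp; ring

lemma div_le_sZero (hr₁ : 0 < r₁) (hr₂ : 0 < r₂) (hε : 0 ≤ ε)
    (ha : aEps r₁ r₂ ε / (r₁ + r₂) ≤ 1) : aEps r₁ r₂ ε / (r₁ + r₂) ≤ sZero r₁ r₂ ε := by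
  have h := half_le_arsinh (div_nonneg (aEps_nonneg hr₁ hr₂ hε) (by positivity)) ha
  rw [sZero]
  linarith [arsinh_div_le_xi hr₁ hr₂ hε hr₁ (by linarith),
    arsinh_div_le_xi hr₁ hr₂ hε hr₂ (by linarith)]

lemma I1_nonneg (hr₁ : 0 < r₁) (hr₂ : 0 < r₂) (hε : 0 ≤ ε) (y θ c : ℝ) :
    0 ≤ I1 r₁ r₂ ε y θ c := by
  have ha := aEps_nonneg hr₁ hr₂ hε
  have hs : 0 ≤ sZero r₁ r₂ ε := add_nonneg (arsinh_nonneg_iff.2 (div_nonneg ha hr₁.le))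
    (arsinh_nonneg_iff.2 (div_nonneg ha hr₂.le))
  unfold I1
  exact div_nonneg (mul_nonneg (one_div_nonneg.2 (mul_nonneg (mul_nonneg zero_le_two ha) hs))
    (pow_nonneg (sqrt_nonneg _) 3)) (sqrt_nonneg _)

lemma exists_I1_le (hr₁ : 0 < r₁) (hr₂ : 0 < r₂) :
    ∃ K, 0 ≤ K ∧ ∀ ε y θ c, 0 < ε → aEps r₁ r₂ ε ≤ rTilde r₁ r₂ → |y| ≤ sZero r₁ r₂ ε →
      arsinh (aEps r₁ r₂ ε / (r₁ + r₂)) ≤ |y - c| → |θ| ≤ π →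
      I1 r₁ r₂ ε y θ c ≤ K * (1 + θ ^ 2 / aEps r₁ r₂ ε ^ 2) := by
  have hρ : 0 < r₁ + r₂ := by linarith
  have hr := rTilde_pos hr₁ hr₂
  have hrρ := rTilde_le_add hr₁ hr₂
  set M := 1 / rTilde r₁ r₂ ^ 2 + 1
  set m := min (1 / (4 * (r₁ + r₂) ^ 2)) (2 / π ^ 2)
  have hm : 0 < m := lt_min (by positivity) (by positivity)
  refine ⟨(r₁ + r₂) / 2 * √(M ^ 3 / m), by positivity, ?_⟩
  intro ε y θ c hε ha hy hc hθ
  set a := aEps r₁ r₂ ε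
  have ha₀ : 0 < a := aEps_pos hr₁ hr₂ hε
  have hs₀ : a / (r₁ + r₂) ≤ sZero r₁ r₂ ε :=
    div_le_sZero hr₁ hr₂ hε.le ((div_le_one hρ).2 (ha.trans hrρ))
  have hs₁ : sZero r₁ r₂ ε ≤ a / rTilde r₁ r₂ := sZero_le hr₁ hr₂ hε.le
  have hS : 0 < a ^ 2 + θ ^ 2 := by positivity
  have hnum : w θ y ^ 2 ≤ M * (a ^ 2 + θ ^ 2) := w_sq_le_mul hr ha (hy.trans hs₁)
  have hden : m * (a ^ 2 + θ ^ 2) ≤ w θ (y - c) ^ 2 := mul_le_w_sq ha₀.le hρ (ha.trans hrρ) hc hθ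
  have hpre : 1 / (2 * a * sZero r₁ r₂ ε) ≤ (r₁ + r₂) / (2 * a ^ 2) :=
    calc 1 / (2 * a * sZero r₁ r₂ ε) ≤ 1 / (2 * a * (a / (r₁ + r₂))) := by gcongr
      _ = (r₁ + r₂) / (2 * a ^ 2) := by field_simp
  calc I1 r₁ r₂ ε y θ c = 1 / (2 * a * sZero r₁ r₂ ε) * (w θ y ^ 3 / w θ (y - c)) := by
        rw [I1, mul_div_assoc]
    _ ≤ (r₁ + r₂) / (2 * a ^ 2) * (√(M ^ 3 / m) * (a ^ 2 + θ ^ 2)) := by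
        refine mul_le_mul hpre ?_ (div_nonneg (pow_nonneg (sqrt_nonneg _) 3) (sqrt_nonneg _))
          (by positivity)
        exact pow_three_div_le (sqrt_nonneg _) (sqrt_nonneg _) hm hS hnum hden
    _ = (r₁ + r₂) / 2 * √(M ^ 3 / m) * (1 + θ ^ 2 / a ^ 2) := by field_simp

lemma abs_muEps_mul_le (hr₁ : 0 < r₁) (hr₂ : 0 < r₂) :
    ∀ᶠ ε in 𝓝[>] 0, |muEps r₁ r₂ ε| * (1 + |log ε|) ≤ 1 / (π * rTilde r₁ r₂) := by
  have hr := rTilde_pos hr₁ hr₂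
  set κ := log (rTilde r₁ r₂) + log 2 -
    2 * (digammaVal (r₁ / (r₁ + r₂)) * digammaVal (r₂ / (r₁ + r₂)) -
        eulerMascheroniConstant ^ 2) /
      (digammaVal (r₁ / (r₁ + r₂)) + digammaVal (r₂ / (r₁ + r₂)) + 2 * eulerMascheroniConstant)
  have hmu : ∀ ε, muEps r₁ r₂ ε = 1 / (2 * π * rTilde r₁ r₂) * (|log ε| + κ)⁻¹ := fun ε => by
    simp only [muEps, κ, add_sub_assoc, add_assoc]
  have hlog : Tendsto (fun ε => |log ε|) (𝓝[>] 0) atTop :=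
    tendsto_abs_atBot_atTop.comp tendsto_log_nhdsGT_zero
  filter_upwards [hlog.eventually_ge_atTop (2 * |κ| + 1)] with ε hε
  have hκ := neg_abs_le κ
  have hL : 0 < |log ε| + κ := by linarith [abs_nonneg κ]
  calc |muEps r₁ r₂ ε| * (1 + |log ε|)
      = 1 / (2 * π * rTilde r₁ r₂) * ((1 + |log ε|) / (|log ε| + κ)) := by
        rw [hmu, abs_mul, abs_of_pos (by positivity), abs_of_pos (inv_pos.2 hL)]
        ring
    _ ≤ 1 / (2 * π * rTilde r₁ r₂) * 2 := by
        gcongr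
        rw [div_le_iff₀ hL]
        linarith
    _ = 1 / (π * rTilde r₁ r₂) := by field_simp

lemma one_add_sq_div_aEps_sq_le {θ : ℝ} (hr₁ : 0 < r₁) (hr₂ : 0 < r₂) (hε₀ : 0 < ε)
    (hε₁ : ε ≤ 1) (hθ₀ : 0 ≤ θ) (hθ : θ ≤ √(ε * |log ε|)) :
    1 + θ ^ 2 / aEps r₁ r₂ ε ^ 2 ≤
      (1 + (r₁ + r₂ + 1) ^ 2 / (2 * r₁ * r₂ * (r₁ + r₂))) * (1 + |log ε|) := by
  have hc : 0 < 2 * r₁ * r₂ * (r₁ + r₂) / (r₁ + r₂ + 1) ^ 2 := by positivity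
  have ha := mul_le_aEps_sq hr₁ hr₂ hε₀.le hε₁
  have hθ2 : θ ^ 2 ≤ ε * |log ε| := (le_sqrt hθ₀ (by positivity)).1 hθ
  have : θ ^ 2 / aEps r₁ r₂ ε ^ 2 ≤
      (r₁ + r₂ + 1) ^ 2 / (2 * r₁ * r₂ * (r₁ + r₂)) * |log ε| :=
    calc θ ^ 2 / aEps r₁ r₂ ε ^ 2
        ≤ ε * |log ε| / (2 * r₁ * r₂ * (r₁ + r₂) / (r₁ + r₂ + 1) ^ 2 * ε) := by gcongr
      _ = _ := by field_simp
  set D := (r₁ + r₂ + 1) ^ 2 / (2 * r₁ * r₂ * (r₁ + r₂))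
  have hD : 0 ≤ D := by positivity
  nlinarith [mul_nonneg hD (abs_nonneg (log ε))]

lemma abs_qh_le {ξ θ B : ℝ} (hr₁ : 0 < r₁) (hr₂ : 0 < r₂) (hε : 0 ≤ ε)
    (hξ : ξ ∈ Icc (-xi r₁ r₁ r₂ ε) (xi r₂ r₁ r₂ ε))
    (hI : ∀ y c, |y| ≤ sZero r₁ r₂ ε → arsinh (aEps r₁ r₂ ε / (r₁ + r₂)) ≤ |y - c| →
      I1 r₁ r₂ ε y θ c ≤ B) :
    |qh r₁ r₂ ε ξ θ| ≤ 2 * (|muConst r₁ r₂ 1| + |muConst r₁ r₂ 2|) * |muEps r₁ r₂ ε| * B := by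
  have h₁ := arsinh_div_le_xi hr₁ hr₂ hε hr₁ (le_add_of_nonneg_right hr₂.le)
  have h₂ := arsinh_div_le_xi hr₁ hr₂ hε hr₂ (le_add_of_nonneg_left hr₁.le)
  have h₀ : 0 ≤ arsinh (aEps r₁ r₂ ε / (r₁ + r₂)) :=
    arsinh_nonneg_iff.2 (div_nonneg (aEps_nonneg hr₁ hr₂ hε) (by positivity))
  have hξ' : |ξ| ≤ sZero r₁ r₂ ε := by
    rw [sZero, abs_le]
    constructor <;> linarith [hξ.1, hξ.2]
  have hnξ' : |-ξ| ≤ sZero r₁ r₂ ε := by rwa [abs_neg]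
  have hJ : ∀ y c, |y| ≤ sZero r₁ r₂ ε → y - c ≤ -arsinh (aEps r₁ r₂ ε / (r₁ + r₂)) →
      |I1 r₁ r₂ ε y θ c| ≤ B := fun y c hy hc => by
    rw [abs_of_nonneg (I1_nonneg hr₁ hr₂ hε y θ c)]
    exact hI y c hy (le_abs.2 (Or.inr (by linarith)))
  rw [qh]
  calc _ ≤ |muEps r₁ r₂ ε| * |muConst r₁ r₂ 1| *
          (|I1 r₁ r₂ ε (-ξ) θ (2 * xi r₁ r₁ r₂ ε)| +
            |I1 r₁ r₂ ε ξ θ (2 * xi r₁ r₁ r₂ ε + 2 * xi r₂ r₁ r₂ ε)|) +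
        |muEps r₁ r₂ ε| * |muConst r₁ r₂ 2| *
          (|I1 r₁ r₂ ε ξ θ (2 * xi r₂ r₁ r₂ ε)| +
            |I1 r₁ r₂ ε (-ξ) θ (2 * xi r₁ r₁ r₂ ε + 2 * xi r₂ r₁ r₂ ε)|) := by
        refine (abs_add_le _ _).trans ?_
        simp only [abs_mul]
        gcongr <;> exact abs_add_le _ _
    _ ≤ |muEps r₁ r₂ ε| * |muConst r₁ r₂ 1| * (B + B) +
        |muEps r₁ r₂ ε| * |muConst r₁ r₂ 2| * (B + B) := by
        gcongr
        · exact hJ _ _ hnξ' (by linarith [hξ.1])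
        · exact hJ _ _ hξ' (by linarith [hξ.2])
        · exact hJ _ _ hξ' (by linarith [hξ.2])
        · exact hJ _ _ hnξ' (by linarith [hξ.1])
    _ = _ := by ring

end

theorem stmt14 (r₁ r₂ : ℝ) (hr₁ : 0 < r₁) (hr₂ : 0 < r₂) :
    ∃ C > 0, ∃ ε₀ > 0, ∀ ε ∈ Set.Ioo 0 ε₀,
      ∀ ξ ∈ Set.Icc (-(xi r₁ r₁ r₂ ε)) (xi r₂ r₁ r₂ ε),
        ∀ θ ∈ Set.Icc 0 Real.pi, θ ≤ Real.sqrt (ε * |Real.log ε|) →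
          |qh r₁ r₂ ε ξ θ| ≤ C := by
  obtain ⟨K, hK, hI1⟩ := exists_I1_le hr₁ hr₂
  have hr := rTilde_pos hr₁ hr₂
  set D := 1 + (r₁ + r₂ + 1) ^ 2 / (2 * r₁ * r₂ * (r₁ + r₂))
  set μ := |muConst r₁ r₂ 1| + |muConst r₁ r₂ 2|
  have hsmall : ∀ᶠ ε in 𝓝[>] 0, ε < 1 ∧ aEps r₁ r₂ ε < rTilde r₁ r₂ :=
    ((eventually_lt_nhds one_pos).and
      ((tendsto_aEps_zero hr₁ hr₂).eventually (eventually_lt_nhds hr))).filter_mono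
      nhdsWithin_le_nhds
  obtain ⟨ε₀, hε₀, hsub⟩ :=
    mem_nhdsGT_iff_exists_Ioo_subset.1 (hsmall.and (abs_muEps_mul_le hr₁ hr₂))
  refine ⟨2 * μ * (K * D) * (1 / (π * rTilde r₁ r₂)) + 1, by positivity, ε₀, hε₀, ?_⟩
  rintro ε hε ξ hξ θ ⟨hθ₀, hθπ⟩ hθ
  obtain ⟨⟨hε₁, ha⟩, hμ⟩ := hsub hε
  have hB : ∀ y c, |y| ≤ sZero r₁ r₂ ε → arsinh (aEps r₁ r₂ ε / (r₁ + r₂)) ≤ |y - c| →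
      I1 r₁ r₂ ε y θ c ≤ K * D * (1 + |log ε|) := fun y c hy hc =>
    calc I1 r₁ r₂ ε y θ c ≤ K * (1 + θ ^ 2 / aEps r₁ r₂ ε ^ 2) :=
          hI1 ε y θ c hε.1 ha.le hy hc (abs_le.2 ⟨by linarith [pi_pos], hθπ⟩)
      _ ≤ K * (D * (1 + |log ε|)) := by
          gcongr
          exact one_add_sq_div_aEps_sq_le hr₁ hr₂ hε.1 hε₁.le hθ₀ hθ
      _ = K * D * (1 + |log ε|) := by ring
  calc |qh r₁ r₂ ε ξ θ| ≤ 2 * μ * |muEps r₁ r₂ ε| * (K * D * (1 + |log ε|)) :=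
        abs_qh_le hr₁ hr₂ hε.1.le hξ hB
    _ = 2 * μ * (K * D) * (|muEps r₁ r₂ ε| * (1 + |log ε|)) := by ring
    _ ≤ 2 * μ * (K * D) * (1 / (π * rTilde r₁ r₂)) := by gcongr
    _ ≤ _ := le_add_of_nonneg_right zero_le_one

end
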